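/- Let (V, I) be an interval system. A decomposition π is completely join-irreducible in D(V, I) if and only if π = π_A for an interval A admitting a greatest proper decomposition {B_j | j ∈ J}, |J| ≥ 2, in which every block B_j is a strong set of (V, I). -/

import Mathlib

variable {V : Type*}

/-- `Q` is a closure system on `V`: it contains `V` and is closed under
intersections of nonempty subfamilies. -/
def IsClosureSystem (Q : Set (Set V)) : Prop :=
  Set.univ ∈ Q ∧ ∀ F ⊆ Q, F.Nonempty → ⋂₀ F ∈ Q

/-- Algebraic: the union of any nonempty chain of closed sets is closed. -/
def IsAlgebraicSystem (Q : Set (Set V)) : Prop :=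
  ∀ C ⊆ Q, C.Nonempty → IsChain (· ⊆ ·) C → ⋃₀ C ∈ Q

/-- Condition (I₀): the empty set and all singletons are closed. -/
def CondI0 (Q : Set (Set V)) : Prop := ∅ ∈ Q ∧ ∀ x : V, {x} ∈ Q

/-- Condition (I₁): the union of two intersecting members is a member. -/
def CondI1 (Q : Set (Set V)) : Prop :=
  ∀ A ∈ Q, ∀ B ∈ Q, (A ∩ B).Nonempty → A ∪ B ∈ Q

/-- Condition (I₂): differences of properly overlapping members are members. -/
def CondI2 (Q : Set (Set V)) : Prop :=
  ∀ A ∈ Q, ∀ B ∈ Q, (A ∩ B).Nonempty → ¬ A ⊆ B → ¬ B ⊆ A → A \ B ∈ Q ∧ B \ A ∈ Q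

/-- An interval system: an algebraic closure system satisfying (I₀), (I₁), (I₂). -/
def IsIntervalSystem (Q : Set (Set V)) : Prop :=
  IsClosureSystem Q ∧ IsAlgebraicSystem Q ∧ CondI0 Q ∧ CondI1 Q ∧ CondI2 Q

/-- `A` is a strong set of the closure system `Q`. -/
def IsStrong (Q : Set (Set V)) (A : Set V) : Prop :=
  A ∈ Q ∧ ∀ B ∈ Q, (A ∩ B).Nonempty → A ⊆ B ∨ B ⊆ A

/-- A decomposition: a partition of `V` (coded as a setoid) all of whose
blocks belong to `Q`.  The refinement order on partitions corresponds to the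
order on `Setoid V` (finer below). -/
def IsDecomp (Q : Set (Set V)) (π : Setoid V) : Prop :=
  ∀ x : V, {y | π.r x y} ∈ Q

/-- The lattice `D(V,Q)` of decompositions, as a subtype of `Setoid V`
with the induced (refinement) partial order. -/
abbrev Decomp (Q : Set (Set V)) := {π : Setoid V // IsDecomp Q π}

/-- `π_A`: the partition with block `A` and all other blocks singletons. -/
def piA (A : Set V) : Setoid V :=
  ⟨fun a b => a = b ∨ (a ∈ A ∧ b ∈ A), by
    constructor
    · intro a; exact Or.inl rfl
    · intro a b h; aesop
    · intro a b c h1 h2; aesop⟩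

/-- A decomposition of `A` in the restricted closure system `(A, Q_A)`,
`Q_A = {C ∩ A | C ∈ Q}`: a partition of `A` all of whose blocks are of the
form `C ∩ A` with `C ∈ Q`. -/
def IsRestDecomp (Q : Set (Set V)) (A : Set V) (μ : Setoid ↥A) : Prop :=
  ∀ x : ↥A, ∃ C ∈ Q, Subtype.val '' {y | μ.r x y} = C ∩ A

/-- `μ` is a greatest proper decomposition of `A` in `(A, Q_A)`: it is proper
(different from `{A}`, i.e. `μ ≠ ⊤`) and every proper decomposition of `A`
refines it. -/
def IsGreatestProperDecomp (Q : Set (Set V)) (A : Set V) (μ : Setoid ↥A) : Prop :=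
  IsRestDecomp Q A μ ∧ μ ≠ ⊤ ∧
    ∀ ν : Setoid ↥A, IsRestDecomp Q A ν → ν ≠ ⊤ → ν ≤ μ

/-- `π` is completely join-irreducible in the lattice `D(V,Q)`: it is not the
least decomposition `Δ` and whenever it is the join (least upper bound within
`D(V,Q)`) of a family of decompositions, it is one of them. -/
def IsCJI (Q : Set (Set V)) (π : Decomp Q) : Prop :=
  π.1 ≠ ⊥ ∧ ∀ S : Set (Decomp Q), IsLUB S π → π ∈ S

/-!
A completely join-irreducible `π` is the join of the decompositions `π_B` over its blocks `B`, so
`π = π_A` for one block `A`. Since `D(V,I)` is a complete lattice, complete join-irreducibility of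
`π_A` means that there is a greatest decomposition strictly below `π_A`, and the decompositions
strictly below `π_A` are exactly the proper decompositions of `A` extended by singletons.

A block `B` of a greatest proper decomposition `μ` of `A` is strong: if an interval `C` overlapped
`B` properly, then the proper decompositions of `A` with the single nontrivial blocks `C ∩ A` and
`A \ C` (an interval by (I₂)) would both refine `μ`, which forces `B = A`.
-/

theorem forall_isLUB_imp_mem_iff {α : Type*} [PartialOrder α] {a : α}
    (h : ∃ b, IsLUB (Set.Iio a) b) :
    (∀ S : Set α, IsLUB S a → a ∈ S) ↔ ∃ b < a, ∀ c < a, c ≤ b := by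
  constructor
  · intro ha
    obtain ⟨b, hb⟩ := h
    refine ⟨b, (le_of_isLUB_Iio a hb).lt_of_ne fun hba => ?_, fun c hc => hb.1 hc⟩
    exact lt_irrefl a (ha (Set.Iio a) (by rwa [hba] at hb))
  · rintro ⟨b, hba, hb⟩ S hS
    by_contra haS
    have hab : a ≤ b := hS.2 fun c hc => hb c ((hS.1 hc).lt_of_ne (ne_of_mem_of_not_mem hc haS))
    exact hab.not_gt hba

namespace Setoid

variable {α β : Type*}

theorem map_mono {r s : Setoid α} (h : r ≤ s) (f : α → β) : r.map f ≤ s.map f :=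
  fun _ _ hr => Relation.EqvGen.mono (fun _ _ ⟨a, b, hab, ha, hb⟩ => ⟨a, b, h hab, ha, hb⟩) _ _ hr

theorem exists_ne_mem_classes_of_ne_top {r : Setoid α} (hr : r ≠ ⊤) :
    ∃ B₁ ∈ r.classes, ∃ B₂ ∈ r.classes, B₁ ≠ B₂ := by
  obtain ⟨a, b, hab⟩ : ∃ a b, ¬ r a b := by simpa [Setoid.eq_top_iff] using hr
  refine ⟨{x | r x a}, r.mem_classes a, {x | r x b}, r.mem_classes b, fun h => hab ?_⟩
  exact (h ▸ r.refl a : a ∈ {x | r x b})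

end Setoid

variable {I : Set (Set V)} {A : Set V}

theorem IsClosureSystem.inter_mem (hI : IsClosureSystem I) {B C : Set V} (hB : B ∈ I)
    (hC : C ∈ I) : B ∩ C ∈ I := by
  simpa using hI.2 {B, C} (Set.insert_subset hB (Set.singleton_subset_iff.2 hC)) ⟨B, by simp⟩

theorem IsClosureSystem.isDecomp_sInf (hI : IsClosureSystem I) {U : Set (Setoid V)}
    (hU : ∀ σ ∈ U, IsDecomp I σ) : IsDecomp I (sInf U) := by
  intro x
  rcases U.eq_empty_or_nonempty with rfl | ⟨σ, hσ⟩
  · convert hI.1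
    exact Set.eq_univ_of_forall fun _ _ h => h.elim
  have hblock : {y | (sInf U).r x y} = ⋂₀ ((fun τ : Setoid V => {y | τ.r x y}) '' U) := by
    ext y
    simp only [Set.sInter_image, Set.mem_iInter, Set.mem_ofPred_eq]
    rfl
  rw [hblock]
  exact hI.2 _ (Set.image_subset_iff.2 fun τ hτ => hU τ hτ x) ⟨_, Set.mem_image_of_mem _ hσ⟩

theorem IsClosureSystem.exists_isLUB (hI : IsClosureSystem I) (S : Set (Decomp I)) :
    ∃ ρ : Decomp I, IsLUB S ρ := by
  let U : Set (Setoid V) := {τ | IsDecomp I τ ∧ ∀ σ ∈ S, σ.1 ≤ τ}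
  refine ⟨⟨sInf U, hI.isDecomp_sInf fun τ hτ => hτ.1⟩, fun σ hσ => ?_, fun ρ hρ => ?_⟩
  · exact show σ.1 ≤ sInf U from le_sInf fun τ hτ => hτ.2 σ hσ
  · exact sInf_le (show ρ.1 ∈ U from ⟨ρ.2, fun σ hσ => hρ hσ⟩)

theorem isCJI_iff (hI : IsClosureSystem I) (π : Decomp I) :
    IsCJI I π ↔ ∃ σ : Decomp I, σ < π ∧ ∀ τ < π, τ ≤ σ := by
  rw [IsCJI, forall_isLUB_imp_mem_iff (hI.exists_isLUB _), and_iff_right_of_imp]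
  rintro ⟨σ, hσ, -⟩
  exact ne_bot_of_gt (show σ.1 < π.1 from hσ)

theorem isDecomp_piA (hI : CondI0 I) (hA : A ∈ I) : IsDecomp I (piA A) := by
  intro x
  by_cases hx : x ∈ A
  · convert hA using 1
    ext y
    exact ⟨(by rintro (rfl | ⟨-, hy⟩) <;> assumption), fun hy => Or.inr ⟨hx, hy⟩⟩
  · convert hI.2 x using 1
    ext y
    exact ⟨(by rintro (rfl | ⟨hx', -⟩); exacts [rfl, absurd hx' hx]), fun hy => Or.inl hy.symm⟩

theorem IsCJI.exists_eq_piA (hI : CondI0 I) {π : Decomp I} (hπ : IsCJI I π) :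
    ∃ A ∈ I, π.1 = piA A := by
  let S : Set (Decomp I) := {τ | ∃ x, τ.1 = piA {y | π.1.r x y}}
  have hS : IsLUB S π := by
    refine ⟨?_, fun ρ hρ x y hxy => ?_⟩
    · rintro τ ⟨x, hτ⟩ a b hab
      rw [hτ] at hab
      rcases hab with rfl | ⟨ha, hb⟩
      exacts [π.1.refl a, π.1.trans (π.1.symm ha) hb]
    · exact hρ (show ⟨piA _, isDecomp_piA hI (π.2 x)⟩ ∈ S from ⟨x, rfl⟩)
        (Or.inr ⟨π.1.refl x, hxy⟩)
  obtain ⟨x, hx⟩ := hπ.2 S hS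
  exact ⟨_, π.2 x, hx⟩

theorem map_val_apply (μ : Setoid A) (x y : V) :
    μ.map Subtype.val x y ↔ x = y ∨ ∃ (hx : x ∈ A) (hy : y ∈ A), μ ⟨x, hx⟩ ⟨y, hy⟩ := by
  rw [Setoid.coe_map_of_ker_le _ _ (Setoid.ker_eq_bot_iff.2 Subtype.val_injective ▸ bot_le)]
  simp only [Pi.sup_apply, Relation.Map, Subtype.exists]
  aesop

theorem map_val_le_piA (μ : Setoid A) : μ.map Subtype.val ≤ piA A := by
  intro x y h
  rcases (map_val_apply μ x y).1 h with rfl | ⟨hx, hy, -⟩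
  exacts [Or.inl rfl, Or.inr ⟨hx, hy⟩]

theorem map_val_comap {σ : Setoid V} (h : σ ≤ piA A) :
    (σ.comap (Subtype.val : A → V)).map Subtype.val = σ := by
  refine Setoid.ext fun x y => ?_
  rw [map_val_apply]
  refine ⟨(by rintro (rfl | ⟨_, _, hxy⟩); exacts [σ.refl x, hxy]), fun hxy => ?_⟩
  rcases h hxy with rfl | ⟨hx, hy⟩
  exacts [Or.inl rfl, Or.inr ⟨hx, hy, hxy⟩]

theorem comap_val_piA : (piA A).comap Subtype.val = (⊤ : Setoid A) :=
  Setoid.eq_top_iff.2 fun a b => Or.inr ⟨a.2, b.2⟩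

theorem map_val_lt_piA_iff {μ : Setoid A} : μ.map Subtype.val < piA A ↔ μ ≠ ⊤ := by
  refine ⟨fun h hμ => h.ne ?_, fun hμ => (map_val_le_piA μ).lt_of_ne fun h => hμ ?_⟩
  · rw [hμ, ← comap_val_piA, map_val_comap le_rfl]
  · rw [← Setoid.comap_map_eq _ μ Subtype.val_injective, h, comap_val_piA]

theorem lt_piA_iff_comap_val_ne_top {σ : Setoid V} (h : σ ≤ piA A) :
    σ < piA A ↔ σ.comap (Subtype.val : A → V) ≠ ⊤ := by
  conv_lhs => rw [← map_val_comap h]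
  exact map_val_lt_piA_iff

theorem isRestDecomp_comap_val {σ : Setoid V} (hσ : IsDecomp I σ) :
    IsRestDecomp I A (σ.comap Subtype.val) := by
  refine fun x => ⟨_, hσ x.1, ?_⟩
  ext y
  exact ⟨(by rintro ⟨b, hb, rfl⟩; exact ⟨hb, b.2⟩), fun ⟨hy, hyA⟩ => ⟨⟨y, hyA⟩, hy, rfl⟩⟩

theorem isDecomp_map_val (hI : IsClosureSystem I) (hI0 : CondI0 I) (hA : A ∈ I)
    {μ : Setoid A} (hμ : IsRestDecomp I A μ) : IsDecomp I (μ.map Subtype.val) := by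
  intro x
  by_cases hx : x ∈ A
  · obtain ⟨C, hC, hCμ⟩ := hμ ⟨x, hx⟩
    convert hI.inter_mem hC hA using 1
    rw [← hCμ]
    ext y
    simp only [Set.mem_ofPred_eq, map_val_apply, Set.mem_image, Subtype.exists]
    aesop
  · convert hI0.2 x using 1
    ext y
    simp only [Set.mem_ofPred_eq, map_val_apply, Set.mem_singleton_iff]
    aesop

theorem exists_greatest_lt_iff_exists_isGreatestProperDecomp (hI : IsClosureSystem I)
    (hI0 : CondI0 I) (hA : A ∈ I) {π : Decomp I} (hπ : π.1 = piA A) :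
    (∃ σ : Decomp I, σ < π ∧ ∀ τ < π, τ ≤ σ) ↔ ∃ μ, IsGreatestProperDecomp I A μ := by
  have hlt : ∀ τ : Decomp I, τ < π ↔ τ.1 < piA A := fun τ => by rw [← hπ]; rfl
  constructor
  · rintro ⟨σ, hσ, hmax⟩
    rw [hlt] at hσ
    refine ⟨σ.1.comap Subtype.val, isRestDecomp_comap_val σ.2,
      (lt_piA_iff_comap_val_ne_top hσ.le).1 hσ, fun ν hν hνtop => ?_⟩
    have hνσ := hmax ⟨_, isDecomp_map_val hI hI0 hA hν⟩ ((hlt _).2 (map_val_lt_piA_iff.2 hνtop))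
    rw [← Setoid.comap_map_eq _ ν Subtype.val_injective]
    exact fun _ _ h => hνσ h
  · rintro ⟨μ, hμ, hμtop, hmax⟩
    refine ⟨⟨_, isDecomp_map_val hI hI0 hA hμ⟩, (hlt _).2 (map_val_lt_piA_iff.2 hμtop),
      fun τ hτ => ?_⟩
    rw [hlt] at hτ
    rw [Subtype.mk_le_mk, ← map_val_comap hτ.le]
    exact Setoid.map_mono (hmax _ (isRestDecomp_comap_val τ.2)
      ((lt_piA_iff_comap_val_ne_top hτ.le).1 hτ)) _

namespace IsGreatestProperDecomp

variable {μ : Setoid A}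

theorem subset_block (hI0 : CondI0 I) (hμ : IsGreatestProperDecomp I A μ) {D : Set V}
    (hD : D ∈ I) (hDA : D ⊆ A) (hAD : ¬ A ⊆ D) {x : A}
    (hxD : (Subtype.val '' {y | μ x y} ∩ D).Nonempty) :
    D ⊆ Subtype.val '' {y | μ x y} := by
  obtain ⟨_, ⟨b, hxb, rfl⟩, hbD⟩ := hxD
  obtain ⟨a, haA, haD⟩ := Set.not_subset.1 hAD
  have hab : ¬ (piA D).comap Subtype.val ⟨a, haA⟩ b := by
    rintro (h | ⟨h, -⟩)
    exacts [haD ((show a = b.1 from h) ▸ hbD), haD h]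
  have hle : (piA D).comap Subtype.val ≤ μ :=
    hμ.2.2 _ (isRestDecomp_comap_val (isDecomp_piA hI0 hD))
      fun h => hab (Setoid.eq_top_iff.1 h _ _)
  exact fun y hy => ⟨⟨y, hDA hy⟩, μ.trans hxb (hle (Or.inr ⟨hbD, hy⟩)), rfl⟩

theorem not_subset_block (hμ : IsGreatestProperDecomp I A μ) (x : A) :
    ¬ A ⊆ Subtype.val '' {y | μ x y} := by
  intro hA
  refine hμ.2.1 (Setoid.eq_top_iff.2 fun a b => ?_)
  have hx : ∀ c : A, μ x c := fun c => by
    obtain ⟨c', hc', hcc'⟩ := hA c.2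
    exact Subtype.ext hcc' ▸ hc'
  exact μ.trans (μ.symm (hx a)) (hx b)

theorem isStrong_block (hI : IsClosureSystem I) (hI0 : CondI0 I) (hI2 : CondI2 I) (hA : A ∈ I)
    (hμ : IsGreatestProperDecomp I A μ) (x : A) : IsStrong I (Subtype.val '' {y | μ x y}) := by
  set B := Subtype.val '' {y | μ x y}
  have hBA : B ⊆ A := Subtype.coe_image_subset A _
  refine ⟨?_, fun C hC hBC => ?_⟩
  · obtain ⟨C, hC, hCμ⟩ := hμ.1 x
    exact (show B = C ∩ A from hCμ) ▸ hI.inter_mem hC hA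
  by_contra! hover
  obtain ⟨hBC', hCB⟩ := hover
  obtain ⟨b₀, hb₀B, hb₀C⟩ := hBC
  obtain ⟨b₁, hb₁B, hb₁C⟩ := Set.not_subset.1 hBC'
  have hAC : ¬ A ⊆ C := fun h => hBC' (hBA.trans h)
  have hCA_B : C ∩ A ⊆ B := hμ.subset_block hI0 (hI.inter_mem hC hA) Set.inter_subset_right
    (fun h => hAC (h.trans Set.inter_subset_left)) ⟨b₀, hb₀B, hb₀C, hBA hb₀B⟩
  have hCA : ¬ C ⊆ A := fun h => hCB fun c hc => hCA_B ⟨hc, h hc⟩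
  have hAdiffC_B : A \ C ⊆ B :=
    hμ.subset_block hI0 (hI2 A hA C hC ⟨b₀, hBA hb₀B, hb₀C⟩ hAC hCA).1 Set.sdiff_subset
      (fun h => (h (hBA hb₀B)).2 hb₀C) ⟨b₁, hb₁B, hBA hb₁B, hb₁C⟩
  refine hμ.not_subset_block x fun y hy => ?_
  by_cases hyC : y ∈ C
  exacts [hCA_B ⟨hyC, hy⟩, hAdiffC_B ⟨hy, hyC⟩]

end IsGreatestProperDecomp

theorem stmt12 (I : Set (Set V)) (hI : IsIntervalSystem I) (π : Decomp I) :
    IsCJI I π ↔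
      ∃ A ∈ I, π.1 = piA A ∧
        ∃ μ : Setoid ↥A, IsGreatestProperDecomp I A μ ∧
          (∃ B₁ ∈ μ.classes, ∃ B₂ ∈ μ.classes, B₁ ≠ B₂) ∧
          ∀ x : ↥A, IsStrong I (Subtype.val '' {y | μ.r x y}) := by
  obtain ⟨hcl, -, hI0, -, hI2⟩ := hI
  constructor
  · intro hπ
    obtain ⟨A, hA, hπA⟩ := hπ.exists_eq_piA hI0
    obtain ⟨μ, hμ⟩ := (exists_greatest_lt_iff_exists_isGreatestProperDecomp hcl hI0 hA hπA).1
      ((isCJI_iff hcl π).1 hπ)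
    exact ⟨A, hA, hπA, μ, hμ, Setoid.exists_ne_mem_classes_of_ne_top hμ.2.1,
      hμ.isStrong_block hcl hI0 hI2 hA⟩
  · rintro ⟨A, hA, hπA, μ, hμ, -, -⟩
    exact (isCJI_iff hcl π).2
      ((exists_greatest_lt_iff_exists_isGreatestProperDecomp hcl hI0 hA hπA).2 ⟨μ, hμ⟩)
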